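/- Fix α ∈ [0,1), γ ∈ (0,1), q > 0 and n̄₁ > 1, and let N_k = N_k(n̄₁) be the constant-flux steady state. Then for every k ≥ 1 one has Q_k < N_k ≤ Q_k n̄₁^k, with N_1 = Q_1 n̄₁ and with the upper inequality strict for every k ≥ 2; in words, the constant-flux steady state lies strictly between the subcritical equilibrium Q_k and the supercritical zero-flux profile Q_k n̄₁^k. -/

import Mathlib

/-- Attachment rate `a_k = k^α`. -/
noncomputable def a (α : ℝ) (k : ℕ) : ℝ := (k : ℝ) ^ α

/-- Detachment rate `b_k = k^α (1 + q k^{−γ})`. -/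
noncomputable def b (α γ q : ℝ) (k : ℕ) : ℝ := (k : ℝ) ^ α * (1 + q * (k : ℝ) ^ (-γ))

/-- Equilibrium coefficients `Q_1 = 1`, `Q_k = ∏_{l=1}^{k−1} a_l / b_{l+1}`. -/
noncomputable def Q (α γ q : ℝ) (k : ℕ) : ℝ :=
  ∏ l ∈ Finset.Icc 1 (k - 1), a α l / b α γ q (l + 1)

/-- Summand `c_l = 1/(a_l Q_l n̄₁^{l+1})` (used for `l ≥ 1`). -/
noncomputable def c (α γ q n₁ : ℝ) (l : ℕ) : ℝ :=
  1 / (a α l * Q α γ q l * n₁ ^ (l + 1))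

/-- Constant flux `J(n̄₁) = (∑_{l=1}^∞ 1/(a_l Q_l n̄₁^{l+1}))⁻¹`. -/
noncomputable def J (α γ q n₁ : ℝ) : ℝ := (∑' i : ℕ, c α γ q n₁ (1 + i))⁻¹

/-- Constant-flux steady state
`N_k(n̄₁) = J(n̄₁) Q_k n̄₁^k ∑_{l=k}^∞ 1/(a_l Q_l n̄₁^{l+1})`. -/
noncomputable def N (α γ q n₁ : ℝ) (k : ℕ) : ℝ :=
  J α γ q n₁ * Q α γ q k * n₁ ^ k * ∑' i : ℕ, c α γ q n₁ (k + i)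

/-!
With the tails `T_k = ∑_{l ≥ k} c_l` one has `N_k = Q_k n̄₁^k T_k / T_1`. The upper bound says
`T_k ≤ T_1`, strictly for `k ≥ 2`, which holds because the `c_l` are positive. Since
`b_{l+1} > a_{l+1}`, the weights `a_l Q_l` are nonincreasing, so
`c_{1+i} < n̄₁^k c_{k+i}` term by term; summing gives the lower bound `T_1 < n̄₁^k T_k`.
The ratio `c_{l+1}/c_l = (1 + q (l+1)^{−γ})/n̄₁ → 1/n̄₁ < 1` makes all the series converge.
-/

open Finset Filter Topology

section

variable {α γ q n₁ : ℝ}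

lemma one_lt_one_add_mul_rpow (hq : 0 < q) {l : ℕ} (hl : 0 < l) :
    1 < 1 + q * (l : ℝ) ^ (-γ) := by
  have : 0 < q * (l : ℝ) ^ (-γ) := mul_pos hq (Real.rpow_pos_of_pos (by exact_mod_cast hl) _)
  linarith

lemma a_pos {l : ℕ} (hl : 0 < l) : 0 < a α l :=
  Real.rpow_pos_of_pos (by exact_mod_cast hl) α

lemma b_eq_a_mul (l : ℕ) : b α γ q l = a α l * (1 + q * (l : ℝ) ^ (-γ)) := rfl

lemma b_pos (hq : 0 < q) {l : ℕ} (hl : 0 < l) : 0 < b α γ q l := by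
  rw [b_eq_a_mul]
  exact mul_pos (a_pos hl) (one_pos.trans (one_lt_one_add_mul_rpow hq hl))

lemma Q_pos (hq : 0 < q) (k : ℕ) : 0 < Q α γ q k :=
  prod_pos fun l hl => div_pos (a_pos (mem_Icc.mp hl).1) (b_pos hq (Nat.add_one_pos l))

lemma Q_succ {l : ℕ} (hl : 1 ≤ l) : Q α γ q (l + 1) = Q α γ q l * (a α l / b α γ q (l + 1)) := by
  obtain ⟨m, rfl⟩ := Nat.exists_eq_add_of_le' hl
  simp only [Q, Nat.add_sub_cancel]
  exact prod_Icc_succ_top (by omega) _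

lemma a_mul_Q_pos (hq : 0 < q) {l : ℕ} (hl : 0 < l) : 0 < a α l * Q α γ q l :=
  mul_pos (a_pos hl) (Q_pos hq l)

lemma a_mul_Q_succ (hq : 0 < q) {l : ℕ} (hl : 1 ≤ l) :
    a α (l + 1) * Q α γ q (l + 1) = a α l * Q α γ q l / (1 + q * ((l + 1 : ℕ) : ℝ) ^ (-γ)) := by
  have ha := a_pos (α := α) (Nat.add_one_pos l)
  have hd := one_lt_one_add_mul_rpow (γ := γ) hq (Nat.add_one_pos l)
  rw [Q_succ hl, b_eq_a_mul]
  field_simp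

lemma antitoneOn_a_mul_Q (hq : 0 < q) :
    AntitoneOn (fun l => a α l * Q α γ q l) (Set.Ici 1) :=
  antitoneOn_nat_Ici_of_succ_le fun l hl => by
    rw [a_mul_Q_succ hq hl]
    exact div_le_self (a_mul_Q_pos hq hl).le (one_lt_one_add_mul_rpow hq (Nat.add_one_pos l)).le

lemma c_pos (hq : 0 < q) (hn₁ : 0 < n₁) {l : ℕ} (hl : 0 < l) : 0 < c α γ q n₁ l :=
  one_div_pos.mpr (mul_pos (a_mul_Q_pos hq hl) (pow_pos hn₁ _))

lemma c_succ (hq : 0 < q) {l : ℕ} (hl : 1 ≤ l) :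
    c α γ q n₁ (l + 1) = c α γ q n₁ l * ((1 + q * ((l + 1 : ℕ) : ℝ) ^ (-γ)) / n₁) := by
  simp only [c]
  rw [a_mul_Q_succ hq hl, pow_succ]
  field_simp

lemma summable_c (hγ : 0 < γ) (hq : 0 < q) (hn₁ : 1 < n₁) : Summable (c α γ q n₁) := by
  have hn₁0 : 0 < n₁ := one_pos.trans hn₁
  have hratio : (fun l : ℕ => (1 + q * ((l + 1 : ℕ) : ℝ) ^ (-γ)) / n₁)
      =ᶠ[atTop] fun l => ‖c α γ q n₁ (l + 1)‖ / ‖c α γ q n₁ l‖ := by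
    filter_upwards [eventually_ge_atTop 1] with l hl
    rw [Real.norm_of_nonneg (c_pos hq hn₁0 (Nat.add_one_pos l)).le,
      Real.norm_of_nonneg (c_pos hq hn₁0 hl).le, c_succ hq hl,
      mul_div_cancel_left₀ _ (c_pos hq hn₁0 hl).ne']
  have hlim : Tendsto (fun l : ℕ => ((l + 1 : ℕ) : ℝ) ^ (-γ)) atTop (𝓝 0) :=
    (tendsto_rpow_neg_atTop hγ).comp
      (tendsto_natCast_atTop_atTop.comp (tendsto_add_atTop_nat 1))
  refine summable_of_ratio_test_tendsto_lt_one ((div_lt_one hn₁0).mpr hn₁)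
    ((eventually_ge_atTop 1).mono fun l hl => (c_pos hq hn₁0 hl).ne')
    (Tendsto.congr' hratio ?_)
  simpa using ((hlim.const_mul q).const_add 1).div_const n₁

lemma c_one_add_lt_pow_mul_c (hq : 0 < q) (hn₁ : 1 < n₁) {k : ℕ} (hk : 1 ≤ k) (i : ℕ) :
    c α γ q n₁ (1 + i) < n₁ ^ k * c α γ q n₁ (k + i) := by
  have hn₁0 : 0 < n₁ := one_pos.trans hn₁
  have hweight : a α (k + i) * Q α γ q (k + i) ≤ a α (1 + i) * Q α γ q (1 + i) :=
    antitoneOn_a_mul_Q hq (Set.mem_Ici.mpr (by omega)) (Set.mem_Ici.mpr (by omega)) (by omega)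
  have hrhs : n₁ ^ k * c α γ q n₁ (k + i) =
      1 / (a α (k + i) * Q α γ q (k + i) * n₁ ^ (i + 1)) := by
    simp only [c]
    rw [show k + i + 1 = k + (i + 1) by omega, pow_add]
    field_simp
  rw [hrhs, c, show 1 + i + 1 = i + 2 by omega]
  apply one_div_lt_one_div_of_lt (mul_pos (a_mul_Q_pos hq (by omega)) (pow_pos hn₁0 _))
  calc a α (k + i) * Q α γ q (k + i) * n₁ ^ (i + 1)
      ≤ a α (1 + i) * Q α γ q (1 + i) * n₁ ^ (i + 1) := by gcongr
    _ < a α (1 + i) * Q α γ q (1 + i) * n₁ ^ (i + 2) :=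
      mul_lt_mul_of_pos_left (pow_lt_pow_right₀ hn₁ (by omega)) (a_mul_Q_pos hq (by omega))

noncomputable def tail (α γ q n₁ : ℝ) (k : ℕ) : ℝ := ∑' i : ℕ, c α γ q n₁ (k + i)

lemma N_eq (k : ℕ) :
    N α γ q n₁ k = Q α γ q k * n₁ ^ k * (tail α γ q n₁ k / tail α γ q n₁ 1) := by
  simp only [N, J, tail]
  ring

lemma summable_c_add (hγ : 0 < γ) (hq : 0 < q) (hn₁ : 1 < n₁) (k : ℕ) :
    Summable fun i => c α γ q n₁ (k + i) :=
  (summable_c hγ hq hn₁).comp_injective (add_right_injective k)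

lemma tail_pos (hγ : 0 < γ) (hq : 0 < q) (hn₁ : 1 < n₁) {k : ℕ} (hk : 1 ≤ k) :
    0 < tail α γ q n₁ k :=
  (summable_c_add hγ hq hn₁ k).tsum_pos
    (fun i => (c_pos hq (one_pos.trans hn₁) (by omega)).le) 0
    (c_pos hq (one_pos.trans hn₁) (by omega))

lemma tail_eq_add_tail_succ (hγ : 0 < γ) (hq : 0 < q) (hn₁ : 1 < n₁) (k : ℕ) :
    tail α γ q n₁ k = c α γ q n₁ k + tail α γ q n₁ (k + 1) := by
  simp only [tail]
  rw [(summable_c_add hγ hq hn₁ k).tsum_eq_zero_add]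
  simp only [add_zero, add_right_comm k 1, ← add_assoc]

lemma tail_succ_lt (hγ : 0 < γ) (hq : 0 < q) (hn₁ : 1 < n₁) {k : ℕ} (hk : 1 ≤ k) :
    tail α γ q n₁ (k + 1) < tail α γ q n₁ k := by
  rw [tail_eq_add_tail_succ hγ hq hn₁ k]
  exact lt_add_of_pos_left _ (c_pos hq (one_pos.trans hn₁) hk)

lemma antitoneOn_tail (hγ : 0 < γ) (hq : 0 < q) (hn₁ : 1 < n₁) :
    AntitoneOn (tail α γ q n₁) (Set.Ici 1) :=
  antitoneOn_nat_Ici_of_succ_le fun _ hk => (tail_succ_lt hγ hq hn₁ hk).le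

lemma tail_lt_tail_one (hγ : 0 < γ) (hq : 0 < q) (hn₁ : 1 < n₁) {k : ℕ} (hk : 2 ≤ k) :
    tail α γ q n₁ k < tail α γ q n₁ 1 :=
  have h2 : (2 : ℕ) ∈ Set.Ici 1 := Set.mem_Ici.mpr one_le_two
  (antitoneOn_tail hγ hq hn₁ h2 (h2.trans hk) hk).trans_lt (tail_succ_lt hγ hq hn₁ le_rfl)

lemma tail_one_lt_pow_mul_tail (hγ : 0 < γ) (hq : 0 < q) (hn₁ : 1 < n₁) {k : ℕ} (hk : 1 ≤ k) :
    tail α γ q n₁ 1 < n₁ ^ k * tail α γ q n₁ k := by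
  rw [tail, tail, ← tsum_mul_left]
  exact (summable_c_add hγ hq hn₁ 1).tsum_lt_tsum
    (fun i => (c_one_add_lt_pow_mul_c hq hn₁ hk i).le) (c_one_add_lt_pow_mul_c hq hn₁ hk 0)
    ((summable_c_add hγ hq hn₁ k).mul_left _)

end

theorem stmt19_general (α γ q n₁ : ℝ)
    (hγ0 : 0 < γ) (hq : 0 < q) (hn₁ : 1 < n₁) :
    (∀ k : ℕ, 1 ≤ k →
        Q α γ q k < N α γ q n₁ k ∧ N α γ q n₁ k ≤ Q α γ q k * n₁ ^ k) ∧
      N α γ q n₁ 1 = Q α γ q 1 * n₁ ∧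
      ∀ k : ℕ, 2 ≤ k → N α γ q n₁ k < Q α γ q k * n₁ ^ k := by
  have hT₁ : 0 < tail α γ q n₁ 1 := tail_pos hγ0 hq hn₁ le_rfl
  have hprofile (k : ℕ) : 0 < Q α γ q k * n₁ ^ k :=
    mul_pos (Q_pos hq k) (pow_pos (one_pos.trans hn₁) k)
  refine ⟨fun k hk => ⟨?_, ?_⟩, ?_, fun k hk => ?_⟩
  · rw [N_eq, mul_assoc, ← mul_div_assoc]
    refine lt_mul_of_one_lt_right (Q_pos hq k) ?_
    exact (one_lt_div hT₁).mpr (tail_one_lt_pow_mul_tail hγ0 hq hn₁ hk)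
  · rw [N_eq]
    exact mul_le_of_le_one_right (hprofile k).le
      ((div_le_one hT₁).mpr (antitoneOn_tail hγ0 hq hn₁ Set.self_mem_Ici hk hk))
  · rw [N_eq, div_self hT₁.ne', pow_one, mul_one]
  · rw [N_eq]
    exact mul_lt_of_lt_one_right (hprofile k)
      ((div_lt_one hT₁).mpr (tail_lt_tail_one hγ0 hq hn₁ hk))

/-- The constant-flux steady state lies strictly between the subcritical
equilibrium `Q_k` and the supercritical zero-flux profile `Q_k n̄₁^k`:
`Q_k < N_k ≤ Q_k n̄₁^k` for `k ≥ 1`, with `N_1 = Q_1 n̄₁` and strict upper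
inequality for `k ≥ 2`. -/
theorem stmt19 (α γ q n₁ : ℝ) (hα0 : 0 ≤ α) (hα1 : α < 1)
    (hγ0 : 0 < γ) (hγ1 : γ < 1) (hq : 0 < q) (hn₁ : 1 < n₁) :
    (∀ k : ℕ, 1 ≤ k →
        Q α γ q k < N α γ q n₁ k ∧ N α γ q n₁ k ≤ Q α γ q k * n₁ ^ k) ∧
      N α γ q n₁ 1 = Q α γ q 1 * n₁ ∧
      ∀ k : ℕ, 2 ≤ k → N α γ q n₁ k < Q α γ q k * n₁ ^ k :=
  stmt19_general α γ q n₁ hγ0 hq hn₁
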